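/- arXiv:1705.01305 — 2 statements merged into one kernel-verified Lean document; each statement's English description precedes it below -/
import Mathlib

section
/- Let assumptions A1 and A2 hold. Let F_f be the cumulative distribution function of the random variable f(X) and let a = sup{t : F_f(t) = 0}. If F_f is invertible on (a, F_f†(1)], then MV* is differentiable on [0,1) and, for every α ∈ [0,1), MV*'(α) = 1/Q*(α). -/
open MeasureTheory Set Filter
open scoped ENNReal Topology symmDiff

noncomputable section

/-- The probability distribution on `ℝ^d` with Lebesgue density `f`. -/
def densMeasure {d : ℕ} (f : (Fin d → ℝ) → ℝ) : Measure (Fin d → ℝ) :=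
  volume.withDensity fun x => ENNReal.ofReal (f x)

/-- A scoring function: measurable, nonnegative and Lebesgue-integrable. -/
def IsScoring {d : ℕ} (s : (Fin d → ℝ) → ℝ) : Prop :=
  Measurable s ∧ (∀ x, 0 ≤ s x) ∧ Integrable s volume

/-- The mass `α_s(t) = P(s(X) ≥ t)` of the level set `{s ≥ t}`. -/
def alphaS {d : ℕ} (μ : Measure (Fin d → ℝ)) (s : (Fin d → ℝ) → ℝ) (t : ℝ) : ℝ :=
  (μ {x | t ≤ s x}).toReal

/-- The Lebesgue volume `λ_s(t)` of the level set `{s ≥ t}`. -/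
def lamS {d : ℕ} (s : (Fin d → ℝ) → ℝ) (t : ℝ) : ℝ :=
  (volume {x | t ≤ s x}).toReal

/-- The generalized inverse `α_s⁻¹(α) = inf {t : α_s(t) ≤ α}`. -/
def alphaInv {d : ℕ} (μ : Measure (Fin d → ℝ)) (s : (Fin d → ℝ) → ℝ) (α : ℝ) : ℝ :=
  sInf {t | alphaS μ s t ≤ α}

/-- The Mass Volume curve `MV_s(α) = λ_s(α_s⁻¹(α))`. -/
def MV {d : ℕ} (μ : Measure (Fin d → ℝ)) (s : (Fin d → ℝ) → ℝ) (α : ℝ) : ℝ :=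
  lamS s (alphaInv μ s α)

/-- The cumulative distribution function `F_s(t) = P(s(X) ≤ t)`. -/
def cdfS {d : ℕ} (μ : Measure (Fin d → ℝ)) (s : (Fin d → ℝ) → ℝ) (t : ℝ) : ℝ :=
  (μ {x | s x ≤ t}).toReal

/-- The quantile function `F_s†(u) = inf {t : F_s(t) ≥ u}`. -/
def quantS {d : ℕ} (μ : Measure (Fin d → ℝ)) (s : (Fin d → ℝ) → ℝ) (u : ℝ) : ℝ :=
  sInf {t | u ≤ cdfS μ s t}

/-! As `f(X)` has no atoms, `α_f = 1 - F_f`, hence `MV*(α) = λ_f(Q*(α))` and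
`α_f(Q*(α)) = α`. On `{s ≤ f < t}` the density lies between `s` and `t`, so the volume between the
levels `Q*(α)` and `Q*(β)` is the mass `|α - β|` divided by a number between these two levels: the
slope of `MV*` between `α` and `β` lies between `1/Q*(α)` and `1/Q*(β)`. Injectivity of `F_f`
makes `Q*` continuous, which squeezes the slope to `1/Q*(α)`. -/

/-- `quantS μ s` is `quantile (cdfS μ s)` by definition. -/
def quantile (F : ℝ → ℝ) (u : ℝ) : ℝ :=
  sInf {t | u ≤ F t}

section Quantile

variable {F : ℝ → ℝ} {u t : ℝ}

lemma quantile_le (hbdd : BddBelow {t | u ≤ F t}) (h : u ≤ F t) : quantile F u ≤ t :=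
  csInf_le hbdd h

lemma apply_lt_of_lt_quantile (hbdd : BddBelow {t | u ≤ F t}) (h : t < quantile F u) :
    F t < u :=
  lt_of_not_ge fun hu => (quantile_le hbdd hu).not_gt h

lemma apply_quantile (hF : Continuous F) (hne : {t | u ≤ F t}.Nonempty)
    (hbdd : BddBelow {t | u ≤ F t}) : F (quantile F u) = u := by
  have hmem : quantile F u ∈ {t | u ≤ F t} :=
    (isClosed_le continuous_const hF).csInf_mem hne hbdd
  refine le_antisymm ?_ hmem
  refine le_of_tendsto ((hF.tendsto _).mono_left (nhdsWithin_le_nhds (s := Iio (quantile F u)))) ?_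
  filter_upwards [self_mem_nhdsWithin] with t ht using (apply_lt_of_lt_quantile hbdd ht).le

lemma quantile_mono {v : ℝ} (hbdd : BddBelow {t | u ≤ F t}) (hne : {t | v ≤ F t}.Nonempty)
    (huv : u ≤ v) : quantile F u ≤ quantile F v :=
  csInf_le_csInf hbdd hne fun _ ht => huv.trans ht

/-- `hrise` rules out a flat piece of `F` at level `u₀`, across which the quantile would jump. -/
lemma continuousWithinAt_quantile {U : Set ℝ} {u₀ T : ℝ} (hF : Continuous F) (hmono : Monotone F)
    (hne : ∀ u ∈ U, {t | u ≤ F t}.Nonempty) (hbdd : ∀ u ∈ U, BddBelow {t | u ≤ F t})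
    (hT : ∀ u ∈ U, quantile F u ≤ T) (hu₀ : u₀ ∈ U)
    (hrise : ∀ t ∈ Ioc (quantile F u₀) T, u₀ < F t) :
    ContinuousWithinAt (quantile F) U u₀ := by
  refine tendsto_order.2 ⟨fun t' ht' => ?_, fun t' ht' => ?_⟩
  · obtain ⟨c, ht'c, hc⟩ := exists_between ht'
    have hFc : F c < u₀ := apply_lt_of_lt_quantile (hbdd u₀ hu₀) hc
    filter_upwards [self_mem_nhdsWithin, nhdsWithin_le_nhds (Ioi_mem_nhds hFc)] with u hu hcu
    refine ht'c.trans (lt_of_not_ge fun hle => ?_)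
    have := hmono hle
    rw [apply_quantile hF (hne u hu) (hbdd u hu)] at this
    exact (lt_of_lt_of_le hcu this).false
  · by_cases hTt' : T < t'
    · filter_upwards [self_mem_nhdsWithin] with u hu using (hT u hu).trans_lt hTt'
    obtain ⟨c, hc, hct'⟩ := exists_between ht'
    have hFc : u₀ < F c := hrise c ⟨hc, hct'.le.trans (not_lt.1 hTt')⟩
    filter_upwards [self_mem_nhdsWithin, nhdsWithin_le_nhds (Iio_mem_nhds hFc)] with u hu hcu
    exact (quantile_le (hbdd u hu) (le_of_lt hcu)).trans_lt hct'

end Quantile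

lemma hasDerivWithinAt_of_slope_mem_uIcc {φ g : ℝ → ℝ} {s : Set ℝ} {x : ℝ}
    (hg : ContinuousWithinAt g s x) (hslope : ∀ y ∈ s, y ≠ x → slope φ x y ∈ uIcc (g x) (g y)) :
    HasDerivWithinAt φ (g x) s x := by
  rw [hasDerivWithinAt_iff_tendsto_slope, tendsto_iff_dist_tendsto_zero]
  have hg0 : Tendsto (fun y => dist (g y) (g x)) (𝓝[s \ {x}] x) (𝓝 0) :=
    tendsto_iff_dist_tendsto_zero.1 (hg.mono sdiff_subset)
  refine squeeze_zero' (.of_forall fun _ => dist_nonneg) ?_ hg0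
  filter_upwards [self_mem_nhdsWithin] with y ⟨hy, hyx⟩
  simpa only [Real.dist_eq] using abs_sub_left_of_mem_uIcc (hslope y hy hyx)

section CDF

variable {d : ℕ} {μ : Measure (Fin d → ℝ)} {s : (Fin d → ℝ) → ℝ}

lemma monotone_cdfS [IsFiniteMeasure μ] : Monotone (cdfS μ s) := fun _ _ hab =>
  ENNReal.toReal_mono (measure_ne_top _ _) (measure_mono fun _ hx => le_trans hx hab)

lemma cdfS_eq_zero_of_nonpos (hnn : ∀ x, 0 ≤ s x) (hatom : ∀ t, μ {x | s x = t} = 0) {t : ℝ}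
    (ht : t ≤ 0) : cdfS μ s t = 0 := by
  have h : μ {x | s x ≤ t} = 0 :=
    measure_mono_null (fun x hx => le_antisymm (le_trans hx ht) (hnn x)) (hatom 0)
  rw [cdfS, h, ENNReal.toReal_zero]

lemma bddBelow_setOf_le_cdfS (hnn : ∀ x, 0 ≤ s x) (hatom : ∀ t, μ {x | s x = t} = 0) {u : ℝ}
    (hu : 0 < u) : BddBelow {t | u ≤ cdfS μ s t} :=
  ⟨0, fun t (ht : u ≤ cdfS μ s t) => le_of_not_gt fun h => by
    rw [cdfS_eq_zero_of_nonpos hnn hatom h.le] at ht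
    exact ht.not_gt hu⟩

variable [IsProbabilityMeasure μ]

lemma cdfS_eq_cdf_map (hs : Measurable s) : cdfS μ s = ProbabilityTheory.cdf (μ.map s) := by
  have := Measure.isProbabilityMeasure_map (μ := μ) hs.aemeasurable
  ext t
  rw [ProbabilityTheory.cdf_eq_real, measureReal_def, Measure.map_apply hs measurableSet_Iic]
  rfl

lemma continuous_cdfS (hs : Measurable s) (hatom : ∀ t, μ {x | s x = t} = 0) :
    Continuous (cdfS μ s) := by
  have := Measure.isProbabilityMeasure_map (μ := μ) hs.aemeasurable
  rw [cdfS_eq_cdf_map hs]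
  set F := ProbabilityTheory.cdf (μ.map s)
  refine continuous_iff_continuousAt.2 fun t => ?_
  rw [F.mono.continuousAt_iff_leftLim_eq_rightLim, F.rightLim_eq]
  have h : F.measure {t} = 0 := by
    rw [ProbabilityTheory.measure_cdf, Measure.map_apply hs (measurableSet_singleton t)]
    exact hatom t
  rw [F.measure_singleton, ENNReal.ofReal_eq_zero, sub_nonpos] at h
  exact le_antisymm (F.mono.leftLim_le le_rfl) h

lemma alphaS_eq_one_sub_cdfS (hs : Measurable s) (hatom : ∀ t, μ {x | s x = t} = 0) (t : ℝ) :
    alphaS μ s t = 1 - cdfS μ s t := by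
  have hcompl : μ {x | t ≤ s x} = μ {x | s x ≤ t}ᶜ := by
    refine le_antisymm ?_ (measure_mono fun x (hx : ¬s x ≤ t) => (not_le.1 hx).le)
    calc μ {x | t ≤ s x} ≤ μ ({x | s x ≤ t}ᶜ ∪ {x | s x = t}) :=
          measure_mono fun x hx => (eq_or_lt_of_le hx).elim (Or.inr ∘ Eq.symm) (Or.inl ∘ not_le.2)
      _ ≤ μ {x | s x ≤ t}ᶜ + μ {x | s x = t} := measure_union_le _ _
      _ = μ {x | s x ≤ t}ᶜ := by rw [hatom, add_zero]
  rw [alphaS, cdfS, hcompl, ← measureReal_def, ← measureReal_def,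
    probReal_compl_eq_one_sub (measurableSet_le hs measurable_const)]

lemma alphaInv_eq_quantS (hs : Measurable s) (hatom : ∀ t, μ {x | s x = t} = 0) (α : ℝ) :
    alphaInv μ s α = quantS μ s (1 - α) := by
  simp only [alphaInv, quantS, alphaS_eq_one_sub_cdfS hs hatom, sub_le_comm]

variable {B : ℝ}

lemma cdfS_eq_one_of_le (hB : ∀ x, s x ≤ B) : cdfS μ s B = 1 := by
  rw [cdfS, show {x | s x ≤ B} = univ from eq_univ_of_forall hB, measure_univ,
    ENNReal.toReal_one]

lemma nonempty_setOf_le_cdfS (hB : ∀ x, s x ≤ B) {u : ℝ} (hu : u ≤ 1) :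
    {t | u ≤ cdfS μ s t}.Nonempty :=
  ⟨B, show u ≤ cdfS μ s B by rwa [cdfS_eq_one_of_le hB]⟩

variable (hs : Measurable s) (hnn : ∀ x, 0 ≤ s x) (hB : ∀ x, s x ≤ B)
  (hatom : ∀ t, μ {x | s x = t} = 0)
include hs hnn hB hatom

lemma cdfS_quantS {u : ℝ} (hu : u ∈ Ioc 0 1) : cdfS μ s (quantS μ s u) = u :=
  apply_quantile (continuous_cdfS hs hatom) (nonempty_setOf_le_cdfS hB hu.2)
    (bddBelow_setOf_le_cdfS hnn hatom hu.1)

lemma quantS_pos {u : ℝ} (hu : u ∈ Ioc 0 1) : 0 < quantS μ s u := by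
  refine lt_of_not_ge fun h => hu.1.ne' ?_
  rw [← cdfS_quantS hs hnn hB hatom hu, cdfS_eq_zero_of_nonpos hnn hatom h]

lemma sSup_cdfS_eq_zero_lt_quantS {u : ℝ} (hu : u ∈ Ioc 0 1) :
    sSup {t | cdfS μ s t = 0} < quantS μ s u := by
  set Z := {t | cdfS μ s t = 0}
  have hZ : BddAbove Z := ⟨B, fun t (ht : cdfS μ s t = 0) => le_of_not_gt fun h => by
    have := monotone_cdfS (μ := μ) (s := s) h.le
    rw [cdfS_eq_one_of_le hB, ht] at this
    exact zero_lt_one.not_ge this⟩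
  have hsup : cdfS μ s (sSup Z) = 0 := (isClosed_eq (continuous_cdfS hs hatom)
    continuous_const).csSup_mem ⟨0, cdfS_eq_zero_of_nonpos hnn hatom le_rfl⟩ hZ
  refine lt_of_not_ge fun h => hu.1.not_ge ?_
  have := monotone_cdfS (μ := μ) (s := s) h
  rwa [hsup, cdfS_quantS hs hnn hB hatom hu] at this

lemma continuousWithinAt_quantS
    (hinj : InjOn (cdfS μ s) (Ioc (sSup {t | cdfS μ s t = 0}) (quantS μ s 1)))
    {u₀ : ℝ} (hu₀ : u₀ ∈ Ioc 0 1) : ContinuousWithinAt (quantS μ s) (Ioc 0 1) u₀ := by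
  have hmem : ∀ u ∈ Ioc (0 : ℝ) 1,
      quantS μ s u ∈ Ioc (sSup {t | cdfS μ s t = 0}) (quantS μ s 1) := fun u hu =>
    ⟨sSup_cdfS_eq_zero_lt_quantS hs hnn hB hatom hu, quantile_mono
      (bddBelow_setOf_le_cdfS hnn hatom hu.1) (nonempty_setOf_le_cdfS hB le_rfl) hu.2⟩
  have hstrict := (monotone_cdfS.monotoneOn _).strictMonoOn_of_injOn hinj
  refine continuousWithinAt_quantile (continuous_cdfS hs hatom) monotone_cdfS
    (fun u hu => nonempty_setOf_le_cdfS hB hu.2)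
    (fun u hu => bddBelow_setOf_le_cdfS hnn hatom hu.1) (fun u hu => (hmem u hu).2) hu₀ ?_
  intro t ht
  have := hstrict (hmem u₀ hu₀) ⟨(hmem u₀ hu₀).1.trans ht.1, ht.2⟩ ht.1
  rwa [cdfS_quantS hs hnn hB hatom hu₀] at this

end CDF

section Density

variable {d : ℕ} {f : (Fin d → ℝ) → ℝ}

lemma densMeasure_setOf_nonpos : densMeasure f {x | f x ≤ 0} = 0 := by
  refine nonpos_iff_eq_zero.1 ?_
  rw [densMeasure, withDensity_apply' _ _]
  simpa using setLIntegral_mono (μ := volume) (s := {x | f x ≤ 0}) measurable_const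
    fun x hx => (ENNReal.ofReal_eq_zero.2 hx).le

lemma densMeasure_setOf_eq_zero (hA2 : ∀ t > (0:ℝ), densMeasure f {x | f x = t} = 0) (t : ℝ) :
    densMeasure f {x | f x = t} = 0 := by
  rcases lt_or_ge 0 t with ht | ht
  · exact hA2 t ht
  exact measure_mono_null (fun x hx => (show f x = t from hx).trans_le ht) densMeasure_setOf_nonpos

lemma ofReal_mul_volume_le_densMeasure (hf : Measurable f) {A : Set (Fin d → ℝ)} {t : ℝ}
    (h : ∀ x ∈ A, t ≤ f x) : ENNReal.ofReal t * volume A ≤ densMeasure f A := by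
  rw [densMeasure, withDensity_apply' _ _, ← setLIntegral_const]
  exact setLIntegral_mono hf.ennreal_ofReal fun x hx => ENNReal.ofReal_le_ofReal (h x hx)

lemma densMeasure_le_ofReal_mul_volume {A : Set (Fin d → ℝ)} {t : ℝ} (h : ∀ x ∈ A, f x ≤ t) :
    densMeasure f A ≤ ENNReal.ofReal t * volume A := by
  rw [densMeasure, withDensity_apply' _ _, ← setLIntegral_const]
  exact setLIntegral_mono measurable_const fun x hx => ENNReal.ofReal_le_ofReal (h x hx)

lemma volume_setOf_le_ne_top (hf : Measurable f) [IsFiniteMeasure (densMeasure f)] {t : ℝ}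
    (ht : 0 < t) : volume {x | t ≤ f x} ≠ ∞ := by
  have h := (ofReal_mul_volume_le_densMeasure (A := {x | t ≤ f x}) hf fun _ hx => hx).trans_lt
    (measure_lt_top (densMeasure f) _)
  exact (ENNReal.lt_top_of_mul_ne_top_right h.ne (ENNReal.ofReal_pos.2 ht).ne').ne

lemma toReal_measure_setOf_le_sub {α : Type*} [MeasurableSpace α] (ν : Measure α) {g : α → ℝ}
    (hg : Measurable g) {s t : ℝ} (hst : s ≤ t) (hfin : ν {x | s ≤ g x} ≠ ∞) :
    (ν {x | s ≤ g x}).toReal - (ν {x | t ≤ g x}).toReal = (ν (g ⁻¹' Ico s t)).toReal := by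
  have hdiff : g ⁻¹' Ico s t = {x | s ≤ g x} \ {x | t ≤ g x} := by
    ext x; simp [not_le]
  rw [hdiff, ← measureReal_def, ← measureReal_def, ← measureReal_def,
    measureReal_sdiff (s₁ := {x | s ≤ g x}) (s₂ := {x | t ≤ g x}) (fun x hx => hst.trans hx)
      (hg measurableSet_Ici) hfin]

lemma lamS_sub_div_alphaS_sub_mem_uIcc (hf : Measurable f) [IsFiniteMeasure (densMeasure f)]
    {s t : ℝ} (hs : 0 < s) (ht : 0 < t)
    (hne : alphaS (densMeasure f) f s ≠ alphaS (densMeasure f) f t) :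
    (lamS f t - lamS f s) / (alphaS (densMeasure f) f t - alphaS (densMeasure f) f s) ∈
      uIcc (1 / s) (1 / t) := by
  wlog hst : s ≤ t generalizing s t
  · rw [uIcc_comm, ← neg_div_neg_eq (lamS f t - lamS f s), neg_sub, neg_sub]
    exact this ht hs hne.symm (le_of_not_ge hst)
  set A := f ⁻¹' Ico s t
  have hvol : volume A ≠ ∞ :=
    ne_top_of_le_ne_top (volume_setOf_le_ne_top hf hs) (measure_mono fun _ hx => hx.1)
  have hM : alphaS (densMeasure f) f s - alphaS (densMeasure f) f t = (densMeasure f A).toReal :=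
    toReal_measure_setOf_le_sub _ hf hst (measure_ne_top _ _)
  have hV : lamS f s - lamS f t = (volume A).toReal :=
    toReal_measure_setOf_le_sub _ hf hst (volume_setOf_le_ne_top hf hs)
  have hlow : s * (volume A).toReal ≤ (densMeasure f A).toReal := by
    simpa [ENNReal.toReal_mul, hs.le] using ENNReal.toReal_mono (measure_ne_top _ _)
      (ofReal_mul_volume_le_densMeasure (A := A) hf fun _ hx => hx.1)
  have hup : (densMeasure f A).toReal ≤ t * (volume A).toReal := by
    simpa [ENNReal.toReal_mul, ht.le] using
      ENNReal.toReal_mono (ENNReal.mul_ne_top ENNReal.ofReal_ne_top hvol)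
      (densMeasure_le_ofReal_mul_volume (A := A) fun _ hx => hx.2.le)
  have hMpos : 0 < (densMeasure f A).toReal :=
    ENNReal.toReal_nonneg.lt_of_ne (hM ▸ sub_ne_zero.2 hne).symm
  rw [← neg_div_neg_eq (lamS f t - lamS f s), neg_sub, neg_sub, hM, hV,
    uIcc_of_ge (one_div_le_one_div_of_le hs hst)]
  constructor
  · rw [div_le_div_iff₀ ht hMpos]; linarith
  · rw [div_le_div_iff₀ hMpos hs]; linarith

end Density

/-- if `F_f` is invertible on `(a, F_f†(1)]` where `a = sup {t : F_f(t) = 0}`,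
then `MV*` is differentiable on `[0,1)` with derivative `1/Q*(α)`, `Q*(α) = F_f†(1−α)`. -/
theorem optimal_MV_curve_derivative {d : ℕ} (f : (Fin d → ℝ) → ℝ)
    (hf_meas : Measurable f) (hf_nonneg : ∀ x, 0 ≤ f x)
    (hf_prob : IsProbabilityMeasure (densMeasure f))
    (hA1 : ∃ B, ∀ x, f x ≤ B)
    (hA2 : ∀ t > (0:ℝ), densMeasure f {x | f x = t} = 0)
    (hinv : InjOn (cdfS (densMeasure f) f)
      (Ioc (sSup {t | cdfS (densMeasure f) f t = 0}) (quantS (densMeasure f) f 1))) :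
    ∀ α ∈ Ico (0:ℝ) 1,
      HasDerivWithinAt (MV (densMeasure f) f)
        (1 / quantS (densMeasure f) f (1 - α)) (Ico (0:ℝ) 1) α := by
  intro α hα
  obtain ⟨B, hB⟩ := hA1
  have hatom := densMeasure_setOf_eq_zero hA2
  have hu : MapsTo (fun β => 1 - β) (Ico (0:ℝ) 1) (Ioc 0 1) := fun β hβ =>
    ⟨by linarith [hβ.2], by linarith [hβ.1]⟩
  have hpos : ∀ β ∈ Ico (0:ℝ) 1, 0 < quantS (densMeasure f) f (1 - β) := fun β hβ =>
    quantS_pos hf_meas hf_nonneg hB hatom (hu hβ)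
  have hmass : ∀ β ∈ Ico (0:ℝ) 1,
      alphaS (densMeasure f) f (quantS (densMeasure f) f (1 - β)) = β := fun β hβ => by
    rw [alphaS_eq_one_sub_cdfS hf_meas hatom, cdfS_quantS hf_meas hf_nonneg hB hatom (hu hβ),
        sub_sub_cancel]
  have hcont : ContinuousWithinAt (fun β => 1 / quantS (densMeasure f) f (1 - β)) (Ico 0 1) α :=
    continuousWithinAt_const.div ((continuousWithinAt_quantS hf_meas hf_nonneg hB hatom hinv
      (hu hα)).comp (continuous_const.sub continuous_id).continuousWithinAt hu) (hpos α hα).ne'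
  refine hasDerivWithinAt_of_slope_mem_uIcc hcont fun β hβ hβα => ?_
  have := lamS_sub_div_alphaS_sub_mem_uIcc hf_meas (hpos α hα) (hpos β hβ)
    (by rw [hmass α hα, hmass β hβ]; exact hβα.symm)
  rw [hmass α hα, hmass β hβ] at this
  rwa [slope_def_field, MV, MV, alphaInv_eq_quantS hf_meas hatom,
    alphaInv_eq_quantS hf_meas hatom]
end
end

section
/- For any scoring function s and any strictly increasing function ψ : [0,∞) → [0,∞) such that ψ∘s is a scoring function, the MV curves coincide: MV_{ψ∘s}(α) = MV_s(α) for every α ∈ (0,1). -/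
open MeasureTheory Set Filter
open scoped ENNReal Topology symmDiff

noncomputable section

/-!
Since `ψ` is strictly increasing on the range of `s`, the super-level sets of `ψ ∘ s` at the
thresholds `ψ u` are exactly those of `s` at `u`, so `α_{ψ∘s}(ψ u) = α_s(u)`. From this one shows
that the level set of `ψ ∘ s` at its generalized inverse `α_{ψ∘s}⁻¹(α)` is the level set of `s` at
`α_s⁻¹(α)`: the inclusion `⊆` compares `α_s` just below `α_s⁻¹(α)`, the inclusion `⊇` uses
continuity from below, `P(s(X) > α_s⁻¹(α)) ≤ α`. Equal level sets have equal volumes.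
-/

theorem measure_setOf_lt_le_of_forall_lt {X : Type*} [MeasurableSpace X] (μ : Measure X)
    (s : X → ℝ) {T : ℝ} {m : ℝ≥0∞} (h : ∀ v, T < v → μ {x | v ≤ s x} ≤ m) :
    μ {x | T < s x} ≤ m := by
  have hunion : {x | T < s x} = ⋃ q ∈ {q : ℚ | T < q}, {x | (q : ℝ) ≤ s x} := by
    ext x
    simp only [mem_ofPred_eq, mem_iUnion, exists_prop]
    constructor
    · intro hx
      obtain ⟨q, hTq, hqs⟩ := exists_rat_btwn hx
      exact ⟨q, hTq, hqs.le⟩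
    · rintro ⟨q, hTq, hqs⟩
      exact hTq.trans_le hqs
  have hanti : Antitone fun q : ℚ => {x | (q : ℝ) ≤ s x} :=
    fun p q h x (hx : (q : ℝ) ≤ s x) => show (p : ℝ) ≤ s x from (Rat.cast_le.2 h).trans hx
  have hdir : DirectedOn (Function.onFun (· ⊆ ·) fun q : ℚ => {x | (q : ℝ) ≤ s x})
      {q : ℚ | T < q} :=
    fun p hp q hq => ⟨min p q, by simpa using lt_min hp hq, hanti (min_le_left p q),
      hanti (min_le_right p q)⟩
  rw [hunion, measure_biUnion_eq_iSup (to_countable _) hdir]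
  exact iSup₂_le fun q hq => h q hq

section LevelSets

variable {d : ℕ} {μ : Measure (Fin d → ℝ)} {s : (Fin d → ℝ) → ℝ} {α c t v : ℝ}

theorem alphaS_antitone [IsFiniteMeasure μ] (s : (Fin d → ℝ) → ℝ) : Antitone (alphaS μ s) :=
  fun _ _ h => ENNReal.toReal_mono (measure_ne_top μ _) (measure_mono fun _ hx => h.trans hx)

theorem alphaS_eq_one_of_forall_le [IsProbabilityMeasure μ] (h : ∀ x, t ≤ s x) :
    alphaS μ s t = 1 := by
  have huniv : {x | t ≤ s x} = univ := eq_univ_of_forall h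
  simp [alphaS, huniv]

theorem setOf_alphaS_le_subset_Ioi [IsProbabilityMeasure μ] (hc : ∀ x, c ≤ s x) (hα : α < 1) :
    {t | alphaS μ s t ≤ α} ⊆ Ioi c := fun t ht => lt_of_not_ge fun htc => by
  rw [mem_ofPred_eq, alphaS_eq_one_of_forall_le fun x => htc.trans (hc x)] at ht
  linarith

theorem exists_alphaS_le [IsFiniteMeasure μ] (hs : Measurable s) (hα : 0 < α) :
    ∃ t, alphaS μ s t ≤ α := by
  have hempty : ⋂ t : ℝ, {x | t ≤ s x} = ∅ :=
    eq_empty_of_forall_notMem fun x hx => (lt_add_one (s x)).not_ge (mem_iInter.1 hx (s x + 1))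
  have htends := tendsto_measure_iInter_atTop (μ := μ)
    (fun t => (measurableSet_le measurable_const hs).nullMeasurableSet)
    (fun _ _ h _ hx => le_trans h hx : Antitone fun t : ℝ => {x | t ≤ s x})
    ⟨0, measure_ne_top μ _⟩
  rw [hempty, measure_empty] at htends
  obtain ⟨t, ht⟩ := (htends.eventually_lt_const (ENNReal.ofReal_pos.2 hα)).exists
  exact ⟨t, ENNReal.toReal_le_of_le_ofReal hα.le ht.le⟩

theorem alphaS_le_of_alphaInv_lt [IsFiniteMeasure μ] (hs : Measurable s) (hα : 0 < α)
    (hv : alphaInv μ s α < v) : alphaS μ s v ≤ α := by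
  obtain ⟨u, hu, huv⟩ := exists_lt_of_csInf_lt (exists_alphaS_le hs hα) hv
  exact (alphaS_antitone s huv.le).trans hu

theorem lt_alphaS_of_lt_alphaInv [IsProbabilityMeasure μ] (hc : ∀ x, c ≤ s x) (hα : α < 1)
    (hv : v < alphaInv μ s α) : α < alphaS μ s v :=
  lt_of_not_ge fun h =>
    (csInf_le ⟨c, fun _ ht => (setOf_alphaS_le_subset_Ioi hc hα ht).le⟩ h).not_gt hv

theorem le_alphaInv [IsProbabilityMeasure μ] (hs : Measurable s) (hc : ∀ x, c ≤ s x)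
    (hα₀ : 0 < α) (hα₁ : α < 1) : c ≤ alphaInv μ s α :=
  le_csInf (exists_alphaS_le hs hα₀) fun _ ht => (setOf_alphaS_le_subset_Ioi hc hα₁ ht).le

theorem measure_alphaInv_lt_le [IsFiniteMeasure μ] (hs : Measurable s) (hα : 0 < α) :
    μ {x | alphaInv μ s α < s x} ≤ ENNReal.ofReal α :=
  measure_setOf_lt_le_of_forall_lt μ s fun _ hv =>
    (ENNReal.le_ofReal_iff_toReal_le (measure_ne_top μ _) hα.le).2
      (alphaS_le_of_alphaInv_lt hs hα hv)

variable {ψ : ℝ → ℝ}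

theorem alphaS_comp_of_strictMonoOn (hc : ∀ x, c ≤ s x) (hψ : StrictMonoOn ψ (Ici c))
    {u : ℝ} (hu : c ≤ u) : alphaS μ (fun x => ψ (s x)) (ψ u) = alphaS μ s u := by
  have hlevel : {x | ψ u ≤ ψ (s x)} = {x | u ≤ s x} := by
    ext x
    exact hψ.le_iff_le hu (hc x)
  rw [alphaS, hlevel, alphaS]

theorem setOf_alphaInv_comp_le [IsProbabilityMeasure μ] (hs : Measurable s)
    (hψs : Measurable fun x => ψ (s x)) (hc : ∀ x, c ≤ s x) (hψ : StrictMonoOn ψ (Ici c))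
    (hα₀ : 0 < α) (hα₁ : α < 1) :
    {x | alphaInv μ (fun x => ψ (s x)) α ≤ ψ (s x)} = {x | alphaInv μ s α ≤ s x} := by
  set T := alphaInv μ s α
  have hT : c ≤ T := le_alphaInv hs hc hα₀ hα₁
  have hψc : ∀ x, ψ c ≤ ψ (s x) := fun x => hψ.monotoneOn self_mem_Ici (hc x) (hc x)
  ext x
  simp only [mem_ofPred_eq]
  constructor
  · intro hx
    by_contra! hxT
    obtain ⟨v, hxv, hvT⟩ := exists_between hxT
    have hcv : c ≤ v := (hc x).trans hxv.le
    have hv := alphaS_le_of_alphaInv_lt hψs hα₀ (hx.trans_lt (hψ (hc x) hcv hxv))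
    rw [alphaS_comp_of_strictMonoOn hc hψ hcv] at hv
    exact (lt_alphaS_of_lt_alphaInv hc hα₁ hvT).not_ge hv
  · intro hx
    refine le_trans ?_ (hψ.monotoneOn hT (hc x) hx)
    by_contra! hTψ
    obtain ⟨t, hψTt, htT'⟩ := exists_between hTψ
    have hsub : {y | t ≤ ψ (s y)} ⊆ {y | T < s y} := fun y hy =>
      lt_of_not_ge fun hyT => ((hψ.monotoneOn (hc y) hT hyT).trans_lt hψTt).not_ge hy
    have ht : alphaS μ (fun x => ψ (s x)) t ≤ α := ENNReal.toReal_le_of_le_ofReal hα₀.le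
      ((measure_mono hsub).trans (measure_alphaInv_lt_le hs hα₀))
    exact (lt_alphaS_of_lt_alphaInv hψc hα₁ htT').not_ge ht

theorem MV_comp_of_strictMonoOn [IsProbabilityMeasure μ] (hs : Measurable s)
    (hψs : Measurable fun x => ψ (s x)) (hc : ∀ x, c ≤ s x) (hψ : StrictMonoOn ψ (Ici c))
    (hα₀ : 0 < α) (hα₁ : α < 1) : MV μ (fun x => ψ (s x)) α = MV μ s α := by
  rw [MV, MV, lamS, lamS, setOf_alphaInv_comp_le hs hψs hc hψ hα₀ hα₁]

end LevelSets

theorem MV_curve_invariant_strictMono_general {d : ℕ} (f : (Fin d → ℝ) → ℝ)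
    (hf_prob : IsProbabilityMeasure (densMeasure f))
    (s : (Fin d → ℝ) → ℝ) (hs : IsScoring s)
    (ψ : ℝ → ℝ) (hψ_mono : StrictMonoOn ψ (Ici (0:ℝ)))
    (hψs : IsScoring (fun x => ψ (s x))) :
    ∀ α ∈ Ioo (0:ℝ) 1,
      MV (densMeasure f) (fun x => ψ (s x)) α = MV (densMeasure f) s α :=
  fun _ hα => MV_comp_of_strictMonoOn hs.1 hψs.1 hs.2.1 hψ_mono hα.1 hα.2

/-- invariance of the MV curve under strictly increasing transforms. -/
theorem MV_curve_invariant_strictMono {d : ℕ} (f : (Fin d → ℝ) → ℝ)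
    (hf_meas : Measurable f) (hf_nonneg : ∀ x, 0 ≤ f x)
    (hf_prob : IsProbabilityMeasure (densMeasure f))
    (s : (Fin d → ℝ) → ℝ) (hs : IsScoring s)
    (ψ : ℝ → ℝ) (hψ_mono : StrictMonoOn ψ (Ici (0:ℝ)))
    (hψ_nonneg : ∀ x ∈ Ici (0:ℝ), 0 ≤ ψ x)
    (hψs : IsScoring (fun x => ψ (s x))) :
    ∀ α ∈ Ioo (0:ℝ) 1,
      MV (densMeasure f) (fun x => ψ (s x)) α = MV (densMeasure f) s α :=
  MV_curve_invariant_strictMono_general f hf_prob s hs ψ hψ_mono hψs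
end
end
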